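/- arXiv:2305.04488 — 2 statements merged into one kernel-verified Lean document; each statement's English description precedes it below -/
import Mathlib

section
/- Let φ ∈ L¹(ℝ^{2n}) ∩ L²(ℝ^{2n}) and k,l ∈ ℤⁿ. Then for almost every (ξ,η) ∈ ℝⁿ×ℝⁿ, the kernel of the Weyl transform of the twisted translate satisfies K_{T^t_{(k,l)}φ}(ξ,η) = e^{πi(2ξ+l)·k} K_φ(ξ+l, η). -/
open MeasureTheory Complex Filter
open scoped Real ENNReal

noncomputable section

/-- Integer–real dot product. -/
def idot {n : ℕ} (k : Fin n → ℤ) (x : Fin n → ℝ) : ℝ := ∑ i, (k i : ℝ) * x i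

/-- Integer–integer dot product. -/
def iidot {n : ℕ} (k l : Fin n → ℤ) : ℤ := ∑ i, k i * l i

/-- Cast an integer vector to a real vector. -/
def intCast {n : ℕ} (k : Fin n → ℤ) : Fin n → ℝ := fun i => (k i : ℝ)

/-- The twisted translation `T^t_{(k,l)} φ` on `ℝⁿ × ℝⁿ`:
`T^t_{(k,l)}φ(x,y) = e^{πi(x·l − y·k)} φ(x−k, y−l)`. -/
def twistT {n : ℕ} (k l : Fin n → ℤ) (φ : (Fin n → ℝ) × (Fin n → ℝ) → ℂ) :
    (Fin n → ℝ) × (Fin n → ℝ) → ℂ := fun p =>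
  Complex.exp (Real.pi * Complex.I * (idot l p.1 - idot k p.2)) *
    φ (p.1 - intCast k, p.2 - intCast l)

/-- The kernel of the Weyl transform of `φ`:
`K_φ(ξ,η) = ∫_{ℝⁿ} φ(x, η−ξ) e^{πi x·(ξ+η)} dx`. -/
def weylKernel {n : ℕ} (φ : (Fin n → ℝ) × (Fin n → ℝ) → ℂ) :
    (Fin n → ℝ) × (Fin n → ℝ) → ℂ := fun p =>
  ∫ x : Fin n → ℝ, φ (x, p.2 - p.1) *
    Complex.exp (Real.pi * Complex.I * (∑ i, x i * (p.1 i + p.2 i)))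

/-- The Zak transform of a kernel `K ∈ L²(ℝ^{2n})`:
`Z K(ξ,ξ',η) = Σ_{m∈ℤⁿ} K(m+ξ,η) e^{−2πi m·ξ'}`. -/
def zakK {n : ℕ} (K : (Fin n → ℝ) × (Fin n → ℝ) → ℂ)
    (ξ ξ' η : Fin n → ℝ) : ℂ :=
  ∑' m : Fin n → ℤ, K (intCast m + ξ, η) *
    Complex.exp (-(2 * Real.pi) * Complex.I * idot m ξ')

/-- The Weyl–Zak transform of `φ`. -/
def zakW {n : ℕ} (φ : (Fin n → ℝ) × (Fin n → ℝ) → ℂ)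
    (ξ ξ' η : Fin n → ℝ) : ℂ := zakK (weylKernel φ) ξ ξ' η

/-- The bracket map `[φ,ψ](ξ,ξ') = ∫_{ℝⁿ} Z_Wφ(ξ,ξ',η) conj(Z_Wψ(ξ,ξ',η)) dη`. -/
def bracket {n : ℕ} (φ ψ : (Fin n → ℝ) × (Fin n → ℝ) → ℂ)
    (ξ ξ' : Fin n → ℝ) : ℂ :=
  ∫ η : Fin n → ℝ, zakW φ ξ ξ' η * (starRingEnd ℂ) (zakW ψ ξ ξ' η)

/-- The (real-valued) autocorrelation bracket `[φ,φ](ξ,ξ') = ∫_{ℝⁿ} |Z_Wφ(ξ,ξ',η)|² dη`. -/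
def abracket {n : ℕ} (φ : (Fin n → ℝ) × (Fin n → ℝ) → ℂ)
    (ξ ξ' : Fin n → ℝ) : ℝ :=
  ∫ η : Fin n → ℝ, ‖zakW φ ξ ξ' η‖ ^ 2

/-- The fundamental domain `[0,1)ⁿ` of `𝕋ⁿ`. -/
def box (n : ℕ) : Set (Fin n → ℝ) := Set.univ.pi fun _ => Set.Ico (0 : ℝ) 1

/-- The `L²` inner product (conjugate-linear in the second argument). -/
def L2inner {α : Type*} [MeasurableSpace α] (μ : Measure α) (f g : α → ℂ) : ℂ :=
  ∫ x, f x * (starRingEnd ℂ) (g x) ∂μ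

/-- `f` belongs to the closed linear span in `L²(ℝ^{2n})` of the twisted translates
`{T^t_{(k,l)}φ : k,l ∈ ℤⁿ}`, i.e. to `V^t(φ)`. -/
def inVt {n : ℕ} (φ f : (Fin n → ℝ) × (Fin n → ℝ) → ℂ) : Prop :=
  ∀ ε : ℝ, 0 < ε →
    ∃ (s : Finset ((Fin n → ℤ) × (Fin n → ℤ))) (a : (Fin n → ℤ) × (Fin n → ℤ) → ℂ),
      eLpNorm (fun p => f p - ∑ kl ∈ s, a kl * twistT kl.1 kl.2 φ p) 2 volume
        < ENNReal.ofReal ε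


/-
Substituting `x ↦ x + k` in the defining integral turns the translate `φ(x - k, ·)` back into
`φ(x, ·)`; the two phases `e^{πi(x·l − y·k)}` and `e^{πi x·(ξ+η)}` then combine into the
constant `e^{πi(2ξ+l)·k}` times the phase `e^{πi x·((ξ+l)+η)}` of `K_φ` at `(ξ + l, η)`.
The identity therefore holds at every point, not just almost everywhere.
-/

lemma twistT_phase_shift {n : ℕ} (k l : Fin n → ℤ) (x ξ η : Fin n → ℝ) :
    idot l (x + intCast k) - idot k (η - ξ) + ∑ i, (x + intCast k) i * (ξ i + η i)
      = ∑ i, (2 * ξ i + (l i : ℝ)) * (k i : ℝ) + ∑ i, x i * ((ξ + intCast l) i + η i) := by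
  simp only [idot, intCast, Pi.add_apply, Pi.sub_apply, ← Finset.sum_sub_distrib,
    ← Finset.sum_add_distrib]
  exact Finset.sum_congr rfl fun i _ => by ring

theorem weylKernel_twistT_apply {n : ℕ} (φ : (Fin n → ℝ) × (Fin n → ℝ) → ℂ)
    (k l : Fin n → ℤ) (p : (Fin n → ℝ) × (Fin n → ℝ)) :
    weylKernel (twistT k l φ) p
      = Complex.exp (Real.pi * Complex.I * (∑ i, (2 * p.1 i + (l i : ℝ)) * (k i : ℝ))) *
          weylKernel φ (p.1 + intCast l, p.2) := by
  obtain ⟨ξ, η⟩ := p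
  simp only [weylKernel]
  rw [← integral_add_right_eq_self _ (intCast k), ← integral_const_mul]
  congr 1
  ext x
  have phase := congrArg (fun t : ℝ => Complex.exp (Real.pi * Complex.I * t))
    (twistT_phase_shift k l x ξ η)
  simp only [Complex.ofReal_add, Complex.ofReal_sub, mul_add ((Real.pi : ℂ) * Complex.I),
    Complex.exp_add] at phase
  simp only [twistT, add_sub_cancel_right, sub_sub]
  linear_combination φ (x, η - (ξ + intCast l)) * phase

theorem weylKernel_twistT_general {n : ℕ} (φ : (Fin n → ℝ) × (Fin n → ℝ) → ℂ)
    (k l : Fin n → ℤ) :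
    ∀ᵐ p : (Fin n → ℝ) × (Fin n → ℝ) ∂volume,
      weylKernel (twistT k l φ) p
        = Complex.exp (Real.pi * Complex.I * (∑ i, (2 * p.1 i + (l i : ℝ)) * (k i : ℝ))) *
            weylKernel φ (p.1 + intCast l, p.2) :=
  Eventually.of_forall (weylKernel_twistT_apply φ k l)

/-- the kernel of the Weyl transform of a twisted translate. -/
theorem weylKernel_twistT {n : ℕ} (φ : (Fin n → ℝ) × (Fin n → ℝ) → ℂ)
    (hφ1 : Integrable φ volume) (hφ2 : MemLp φ 2 volume) (k l : Fin n → ℤ) :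
    ∀ᵐ p : (Fin n → ℝ) × (Fin n → ℝ) ∂volume,
      weylKernel (twistT k l φ) p
        = Complex.exp (Real.pi * Complex.I * (∑ i, (2 * p.1 i + (l i : ℝ)) * (k i : ℝ))) *
            weylKernel φ (p.1 + intCast l, p.2) :=
  weylKernel_twistT_general φ k l
end
end

section
/- Let φ ∈ L¹(ℝ^{2n}) ∩ L²(ℝ^{2n}) and k,l ∈ ℤⁿ. Then for almost every ξ, ξ' ∈ 𝕋ⁿ and η ∈ ℝⁿ, Z_W(T^t_{(k,l)}φ)(ξ,ξ',η) = e^{2πi(k·ξ + l·ξ')} e^{πi k·l} Z_Wφ(ξ,ξ',η). -/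
open MeasureTheory Complex Filter
open scoped Real ENNReal

noncomputable section

/-!
Substituting `x ↦ x + k` in the integral defining `K_{T^t_{(k,l)}φ}(ξ, η)` shows that it equals
`e^{πi k·l} e^{2πi k·ξ} K_φ(ξ + l, η)`. The Zak transform turns the modulation `e^{2πi k·ξ}` into
the same factor, since `e^{2πi k·m} = 1` for `m ∈ ℤⁿ`, and the shift by `l` into `e^{2πi l·ξ'}`
after reindexing `m ↦ m + l`. Translation invariance of the Bochner integral and reindexing of
`tsum` need no integrability or summability, so the identity holds at every point.
-/

section WeylZak

variable {n : ℕ}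

lemma idot_add (k : Fin n → ℤ) (x y : Fin n → ℝ) : idot k (x + y) = idot k x + idot k y := by
  simp only [idot, Pi.add_apply, mul_add, Finset.sum_add_distrib]

lemma idot_sub_left (k l : Fin n → ℤ) (x : Fin n → ℝ) :
    idot (k - l) x = idot k x - idot l x := by
  simp only [idot, Pi.sub_apply, Int.cast_sub, sub_mul, Finset.sum_sub_distrib]

lemma idot_intCast (k m : Fin n → ℤ) : idot k (intCast m) = iidot k m := by
  simp [idot, iidot, intCast]

lemma exp_two_pi_I_idot_intCast (k m : Fin n → ℤ) :
    Complex.exp (2 * π * I * idot k (intCast m)) = 1 := by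
  rw [idot_intCast, Complex.ofReal_intCast, mul_comm, Complex.exp_int_mul_two_pi_mul_I]

lemma zakK_const_mul (c : ℂ) (K : (Fin n → ℝ) × (Fin n → ℝ) → ℂ) (ξ ξ' η : Fin n → ℝ) :
    zakK (fun p => c * K p) ξ ξ' η = c * zakK K ξ ξ' η := by
  simp only [zakK, mul_assoc, tsum_mul_left]

lemma zakK_modulate (k : Fin n → ℤ) (K : (Fin n → ℝ) × (Fin n → ℝ) → ℂ) (ξ ξ' η : Fin n → ℝ) :
    zakK (fun p => Complex.exp (2 * π * I * idot k p.1) * K p) ξ ξ' η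
      = Complex.exp (2 * π * I * idot k ξ) * zakK K ξ ξ' η := by
  rw [zakK, zakK, ← tsum_mul_left]
  refine tsum_congr fun m => ?_
  rw [idot_add, Complex.ofReal_add, mul_add, Complex.exp_add, exp_two_pi_I_idot_intCast]
  ring

lemma zakK_translate (l : Fin n → ℤ) (K : (Fin n → ℝ) × (Fin n → ℝ) → ℂ) (ξ ξ' η : Fin n → ℝ) :
    zakK (fun p => K (p.1 + intCast l, p.2)) ξ ξ' η
      = Complex.exp (2 * π * I * idot l ξ') * zakK K ξ ξ' η := by
  rw [zakK, zakK, ← (Equiv.subRight l).tsum_eq, ← tsum_mul_left]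
  refine tsum_congr fun m => ?_
  have hm : intCast (m - l) + ξ + intCast l = intCast m + ξ := by
    ext i; simp only [intCast, Pi.add_apply, Pi.sub_apply, Int.cast_sub]; ring
  have hphase : -(2 * π) * I * (idot (m - l) ξ' : ℂ)
      = 2 * π * I * idot l ξ' + -(2 * π) * I * idot m ξ' := by
    rw [idot_sub_left]; push_cast; ring
  simp only [Equiv.subRight_apply, hm, hphase, Complex.exp_add]
  ring

lemma weylKernel_twistT_s4 (k l : Fin n → ℤ) (φ : (Fin n → ℝ) × (Fin n → ℝ) → ℂ) :
    weylKernel (twistT k l φ)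
      = fun p => Complex.exp (π * I * (iidot k l : ℝ)) *
          (Complex.exp (2 * π * I * idot k p.1) * weylKernel φ (p.1 + intCast l, p.2)) := by
  ext ⟨ξ, η⟩
  rw [weylKernel, ← integral_add_right_eq_self _ (intCast k), weylKernel, ← integral_const_mul,
    ← integral_const_mul]
  refine integral_congr_ae (Eventually.of_forall fun x => ?_)
  have harg : η - ξ - intCast l = η - (ξ + intCast l) := sub_sub _ _ _
  have hphase : π * I * ((idot l (x + intCast k) : ℂ) - idot k (η - ξ))
        + π * I * ((∑ i, (x + intCast k) i * (ξ i + η i) : ℝ) : ℂ)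
      = π * I * (iidot k l : ℝ) + 2 * π * I * idot k ξ
        + π * I * ((∑ i, x i * ((ξ + intCast l) i + η i) : ℝ) : ℂ) := by
    simp only [idot, iidot, intCast, Pi.add_apply, Pi.sub_apply]
    push_cast
    simp only [Finset.mul_sum, ← Finset.sum_add_distrib, ← Finset.sum_sub_distrib]
    refine Finset.sum_congr rfl fun i _ => ?_
    ring
  simp only [twistT, add_sub_cancel_right, harg]
  rw [← mul_assoc, ← mul_assoc, mul_right_comm _ _ (cexp _), ← Complex.exp_add, hphase,
    Complex.exp_add, Complex.exp_add]
  ring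

end WeylZak

theorem zakW_twistT_general {n : ℕ} (φ : (Fin n → ℝ) × (Fin n → ℝ) → ℂ)
    (k l : Fin n → ℤ) :
    ∀ᵐ q : (Fin n → ℝ) × (Fin n → ℝ) × (Fin n → ℝ)
        ∂(volume.restrict (box n ×ˢ box n ×ˢ (Set.univ : Set (Fin n → ℝ)))),
      zakW (twistT k l φ) q.1 q.2.1 q.2.2
        = Complex.exp (2 * Real.pi * Complex.I * (idot k q.1 + idot l q.2.1)) *
            Complex.exp (Real.pi * Complex.I * ((iidot k l : ℤ) : ℝ)) *
            zakW φ q.1 q.2.1 q.2.2 := by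
  refine Eventually.of_forall fun ⟨ξ, ξ', η⟩ => ?_
  simp only [zakW, weylKernel_twistT_s4, zakK_const_mul, zakK_modulate,
    zakK_translate (K := weylKernel φ), mul_add, Complex.exp_add]
  ring

/-- the Weyl–Zak transform of a twisted translate. -/
theorem zakW_twistT {n : ℕ} (φ : (Fin n → ℝ) × (Fin n → ℝ) → ℂ)
    (hφ1 : Integrable φ volume) (hφ2 : MemLp φ 2 volume) (k l : Fin n → ℤ) :
    ∀ᵐ q : (Fin n → ℝ) × (Fin n → ℝ) × (Fin n → ℝ)
        ∂(volume.restrict (box n ×ˢ box n ×ˢ (Set.univ : Set (Fin n → ℝ)))),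
      zakW (twistT k l φ) q.1 q.2.1 q.2.2
        = Complex.exp (2 * Real.pi * Complex.I * (idot k q.1 + idot l q.2.1)) *
            Complex.exp (Real.pi * Complex.I * ((iidot k l : ℤ) : ℝ)) *
            zakW φ q.1 q.2.1 q.2.2 :=
  zakW_twistT_general φ k l
end
end
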